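/- arXiv:2407.02369 — 2 statements merged into one kernel-verified Lean document; each statement's English description precedes it below -/
import Mathlib

section
/- Suppose ‖Q_0‖ ≤ C_max/(1 − β). Then after one smooth two-step Q-learning update, for every (i,a) ∈ S × A, |Q_1(i,a)| ≤ (C_max/(1 − β) + (log|A|)/(N(1 − β)))(1 + β|θ_0|); consequently ‖Q_1‖ ≤ (C_max/(1 − β) + (log|A|)/(N(1 − β)))(1 + β|θ_0|). -/
open Finset Real Filter

variable {S A : Type*}

/-- Maximum norm `‖Q‖ = max_{(i,a)} |Q(i,a)|`. -/
noncomputable def maxNorm [Fintype S] [Fintype A] [Nonempty S] [Nonempty A]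
    (Q : S × A → ℝ) : ℝ :=
  Finset.univ.sup' Finset.univ_nonempty fun x => |Q x|

/-- One smooth two-step Q-learning (S-TSQL) update: the selected pair `sa` is updated
using rewards `c'`, `c''`, next states `j`, `k`, step size `α`, parameter `θ`, and the
log-sum-exp operator with parameter `N` in place of the max; all other entries stay
unchanged. -/
noncomputable def stsqlUpdate [Fintype A] [DecidableEq S] [DecidableEq A]
    (β N : ℝ) (Q : S × A → ℝ) (sa : S × A) (j k : S) (c' c'' α θ : ℝ) : S × A → ℝ :=
  fun x => if x = sa then
      (1 - α) * Q sa +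
        α * (c' + (β / N) * Real.log (∑ b, Real.exp (N * Q (j, b)))
          + β * θ * (c'' + (β / N) * Real.log (∑ e, Real.exp (N * Q (k, e)))))
    else Q x

/-!
Write `M = C_max/(1 - β)` and `L = log|A|/(N(1 - β))`. The log-sum-exp operator is within
`log|A|/N` of the maximum, so `(β/N) log ∑_b e^{N Q₀(s,b)}` has absolute value at most
`β M + β log|A|/N`. As `C_max + β M = M` and `β ≤ 1/(1 - β)`, each one-step target
`c + (β/N) log ∑_b e^{N Q₀(s,b)}` is bounded by `M + L`, hence the two-step target by
`(M + L)(1 + β|θ₀|)`. This bound also dominates `‖Q₀‖ ≤ M`, and the update is a convex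
combination of `Q₀(s₀,a₀)` and the target.
-/

theorem abs_log_sum_exp_le {ι : Type*} [Fintype ι] [Nonempty ι] {f : ι → ℝ} {M : ℝ}
    (hf : ∀ i, |f i| ≤ M) :
    |log (∑ i, exp (f i))| ≤ M + log (Fintype.card ι) := by
  obtain ⟨i₀⟩ := ‹Nonempty ι›
  have hcard : (1 : ℝ) ≤ Fintype.card ι := by exact_mod_cast Fintype.card_pos
  have hsum_pos : 0 < ∑ i, exp (f i) := Finset.sum_pos (fun i _ => exp_pos _) univ_nonempty
  have hlower : f i₀ ≤ log (∑ i, exp (f i)) := by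
    rw [← log_exp (f i₀)]
    exact log_le_log (exp_pos _)
      (single_le_sum (f := fun i => exp (f i)) (fun i _ => (exp_pos _).le) (mem_univ i₀))
  have hupper : ∑ i, exp (f i) ≤ Fintype.card ι * exp M := by
    calc ∑ i, exp (f i) ≤ ∑ _i : ι, exp M :=
          sum_le_sum fun i _ => exp_le_exp.2 (abs_le.1 (hf i)).2
      _ = Fintype.card ι * exp M := by simp
  have hupper_log : log (∑ i, exp (f i)) ≤ log (Fintype.card ι) + M := by
    rw [← log_exp M, ← log_mul (by positivity) (exp_pos _).ne']
    exact log_le_log hsum_pos hupper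
  have hf₀ := (abs_le.1 (hf i₀)).1
  have hlog_card := log_nonneg hcard
  exact abs_le.2 ⟨by linarith, by linarith⟩

theorem abs_one_sub_mul_add_mul_le {x y α B : ℝ} (hα0 : 0 ≤ α) (hα1 : α ≤ 1)
    (hx : |x| ≤ B) (hy : |y| ≤ B) : |(1 - α) * x + α * y| ≤ B := by
  calc |(1 - α) * x + α * y| ≤ (1 - α) * |x| + α * |y| := by
        refine (abs_add_le _ _).trans_eq ?_
        rw [abs_mul, abs_mul, abs_of_nonneg (sub_nonneg.2 hα1), abs_of_nonneg hα0]
    _ ≤ (1 - α) * B + α * B := by gcongr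
    _ = B := by ring

section maxNorm

variable [Fintype S] [Fintype A] [Nonempty S] [Nonempty A]

theorem abs_le_maxNorm (Q : S × A → ℝ) (x : S × A) : |Q x| ≤ maxNorm Q :=
  le_sup' (fun y => |Q y|) (mem_univ x)

theorem maxNorm_le {Q : S × A → ℝ} {B : ℝ} (h : ∀ x, |Q x| ≤ B) : maxNorm Q ≤ B :=
  sup'_le _ _ fun x _ => h x

end maxNorm

theorem abs_stsqlUpdate_le [Fintype A] [DecidableEq S] [DecidableEq A]
    {β N c' c'' α θ B : ℝ} {Q : S × A → ℝ} {sa : S × A} {j k : S}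
    (hα0 : 0 ≤ α) (hα1 : α ≤ 1) (hQ : ∀ x, |Q x| ≤ B)
    (htarget : |c' + (β / N) * log (∑ b, exp (N * Q (j, b)))
        + β * θ * (c'' + (β / N) * log (∑ e, exp (N * Q (k, e))))| ≤ B)
    (x : S × A) : |stsqlUpdate β N Q sa j k c' c'' α θ x| ≤ B := by
  unfold stsqlUpdate
  split_ifs
  · exact abs_one_sub_mul_add_mul_le hα0 hα1 (hQ sa) htarget
  · exact hQ x

theorem abs_add_discounted_log_sum_exp_le [Fintype A] [Nonempty A]
    {β N Cmax c : ℝ} {Q : S × A → ℝ} (hβ0 : 0 ≤ β) (hβ1 : β < 1) (hN : 0 < N)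
    (hc : |c| ≤ Cmax) (hQ : ∀ x, |Q x| ≤ Cmax / (1 - β)) (s : S) :
    |c + (β / N) * log (∑ b, exp (N * Q (s, b)))| ≤
      Cmax / (1 - β) + log (Fintype.card A) / (N * (1 - β)) := by
  have h1β : 0 < 1 - β := by linarith
  have hlog : 0 ≤ log (Fintype.card A) := log_nonneg (by exact_mod_cast Fintype.card_pos)
  have hlse : |log (∑ b, exp (N * Q (s, b)))| ≤ N * (Cmax / (1 - β)) + log (Fintype.card A) :=
    abs_log_sum_exp_le fun b => by
      rw [abs_mul, abs_of_pos hN]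
      exact mul_le_mul_of_nonneg_left (hQ (s, b)) hN.le
  have hfixed : Cmax + β * (Cmax / (1 - β)) = Cmax / (1 - β) := by field_simp; ring
  have hdisc : β * log (Fintype.card A) / N ≤ log (Fintype.card A) / (N * (1 - β)) := by
    rw [div_le_div_iff₀ hN (mul_pos hN h1β)]
    nlinarith [mul_nonneg hlog hN.le, sq_nonneg (β - 1 / 2)]
  calc |c + (β / N) * log (∑ b, exp (N * Q (s, b)))|
      ≤ Cmax + β / N * (N * (Cmax / (1 - β)) + log (Fintype.card A)) := by
        refine (abs_add_le _ _).trans (add_le_add hc ?_)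
        rw [abs_mul, abs_of_nonneg (by positivity)]
        gcongr
    _ = Cmax / (1 - β) + β * log (Fintype.card A) / N := by
        rw [← hfixed]; field_simp; ring
    _ ≤ _ := by gcongr

theorem stsql_one_step_bound_general [Fintype S] [Fintype A] [Nonempty S] [Nonempty A]
    [DecidableEq S] [DecidableEq A]
    (β Cmax : ℝ) (hβ0 : 0 ≤ β) (hβ1 : β < 1)
    (N : ℝ) (hN : 0 < N)
    (Q0 : S × A → ℝ) (sa : S × A) (j k : S) (c' c'' α0 θ0 : ℝ)
    (hc' : |c'| ≤ Cmax) (hc'' : |c''| ≤ Cmax)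
    (hα0 : 0 ≤ α0) (hα1 : α0 ≤ 1)
    (hQ0 : maxNorm Q0 ≤ Cmax / (1 - β)) :
    (∀ x : S × A, |stsqlUpdate β N Q0 sa j k c' c'' α0 θ0 x| ≤
        (Cmax / (1 - β) + Real.log (Fintype.card A) / (N * (1 - β))) * (1 + β * |θ0|)) ∧
    maxNorm (stsqlUpdate β N Q0 sa j k c' c'' α0 θ0) ≤
      (Cmax / (1 - β) + Real.log (Fintype.card A) / (N * (1 - β))) * (1 + β * |θ0|) := by
  set B := Cmax / (1 - β) + log (Fintype.card A) / (N * (1 - β))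
  have hQ : ∀ x, |Q0 x| ≤ Cmax / (1 - β) := fun x => (abs_le_maxNorm Q0 x).trans hQ0
  have hj := abs_add_discounted_log_sum_exp_le hβ0 hβ1 hN hc' hQ j
  have hk := abs_add_discounted_log_sum_exp_le hβ0 hβ1 hN hc'' hQ k
  have hB : Cmax / (1 - β) ≤ B := le_add_of_nonneg_right <|
    div_nonneg (log_nonneg (by exact_mod_cast Fintype.card_pos)) (mul_pos hN (by linarith)).le
  have hgrowth : 0 ≤ β * |θ0| := by positivity
  have hQB : ∀ x, |Q0 x| ≤ B * (1 + β * |θ0|) := fun x =>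
    calc |Q0 x| ≤ B := (hQ x).trans hB
      _ ≤ B * (1 + β * |θ0|) :=
        le_mul_of_one_le_right ((abs_nonneg _).trans ((hQ x).trans hB)) (by linarith)
  have htarget : |c' + (β / N) * log (∑ b, exp (N * Q0 (j, b)))
      + β * θ0 * (c'' + (β / N) * log (∑ e, exp (N * Q0 (k, e))))| ≤ B * (1 + β * |θ0|) := by
    refine (abs_add_le _ _).trans ?_
    rw [abs_mul, abs_mul, abs_of_nonneg hβ0]
    linarith [mul_le_mul_of_nonneg_left hk hgrowth]
  have hbound := abs_stsqlUpdate_le (sa := sa) hα0 hα1 hQB htarget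
  exact ⟨hbound, maxNorm_le hbound⟩

/-- If `‖Q₀‖ ≤ C_max/(1−β)` then after one S-TSQL update,
`|Q₁(i,a)| ≤ (C_max/(1−β) + log|A|/(N(1−β)))(1 + β|θ₀|)` for every `(i,a)`, and hence
the same bound holds for `‖Q₁‖`. -/
theorem stsql_one_step_bound [Fintype S] [Fintype A] [Nonempty S] [Nonempty A]
    [DecidableEq S] [DecidableEq A]
    (β Cmax : ℝ) (hβ0 : 0 ≤ β) (hβ1 : β < 1) (hC : 0 ≤ Cmax)
    (N : ℝ) (hN : 0 < N)
    (Q0 : S × A → ℝ) (sa : S × A) (j k : S) (c' c'' α0 θ0 : ℝ)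
    (hc' : |c'| ≤ Cmax) (hc'' : |c''| ≤ Cmax)
    (hα0 : 0 ≤ α0) (hα1 : α0 ≤ 1) (hθ : |θ0| ≤ 1)
    (hQ0 : maxNorm Q0 ≤ Cmax / (1 - β)) :
    (∀ x : S × A, |stsqlUpdate β N Q0 sa j k c' c'' α0 θ0 x| ≤
        (Cmax / (1 - β) + Real.log (Fintype.card A) / (N * (1 - β))) * (1 + β * |θ0|)) ∧
    maxNorm (stsqlUpdate β N Q0 sa j k c' c'' α0 θ0) ≤
      (Cmax / (1 - β) + Real.log (Fintype.card A) / (N * (1 - β))) * (1 + β * |θ0|) :=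
  stsql_one_step_bound_general β Cmax hβ0 hβ1 N hN Q0 sa j k c' c'' α0 θ0 hc' hc'' hα0 hα1 hQ0
end

section
/- Let L ≥ (C_max/(1 − β) + (log|A|)/(N(1 − β)))(1 + β|θ_0|) and suppose ‖Q_n‖ ≤ L. Then the Q-function Q_{n+1} obtained from one smooth two-step Q-learning update with step size α_n ∈ [0,1] and parameter θ_n with |θ_n| ≤ |θ_0| satisfies ‖Q_{n+1}‖ ≤ L (1 + α_n β² |θ_n|). -/
open Finset Real Filter

variable {S A : Type*}

/-!
The log-sum-exp operator `(1/N) log ∑ exp (N ·)` overestimates the maximum by at most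
`log |A| / N`, so each bootstrapped target `c + (β/N) log ∑ exp (N Q)` is bounded by
`D + β L` with `D = C_max + log |A| / N`. The hypothesis on `L` says `D (1 + β|θ|) ≤ (1 - β) L`,
which turns the two-step target bound `(D + β L)(1 + β|θ|)` into `L (1 + β² |θ|)`;
the update is a convex combination of this target and `Q(s,a)`.
-/

theorem maxNorm_le_iff [Fintype S] [Fintype A] [Nonempty S] [Nonempty A] {Q : S × A → ℝ}
    {L : ℝ} : maxNorm Q ≤ L ↔ ∀ x, |Q x| ≤ L := by
  simp [maxNorm, Finset.sup'_le_iff]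

theorem log_card_nonneg (ι : Type*) [Fintype ι] [Nonempty ι] :
    0 ≤ log (Fintype.card ι) :=
  log_nonneg (Nat.one_le_cast.mpr Fintype.card_pos)

theorem abs_log_sum_exp_mul_le {ι : Type*} [Fintype ι] [Nonempty ι] {f : ι → ℝ} {N L : ℝ}
    (hN : 0 < N) (hf : ∀ i, |f i| ≤ L) :
    |log (∑ i, exp (N * f i))| ≤ N * L + log (Fintype.card ι) := by
  have hcard : (0 : ℝ) < Fintype.card ι := by exact_mod_cast Fintype.card_pos
  have hsum_pos : 0 < ∑ i, exp (N * f i) := Finset.sum_pos (fun i _ => exp_pos _) univ_nonempty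
  rw [abs_le]
  constructor
  · obtain ⟨i⟩ := ‹Nonempty ι›
    have hsingle : exp (N * f i) ≤ ∑ i, exp (N * f i) :=
      Finset.single_le_sum (f := fun i => exp (N * f i)) (fun i _ => (exp_pos _).le) (mem_univ i)
    have hlog : N * f i ≤ log (∑ i, exp (N * f i)) := by
      simpa using log_le_log (exp_pos _) hsingle
    nlinarith [(abs_le.mp (hf i)).1, log_card_nonneg ι]
  · have hsum_le : ∑ i, exp (N * f i) ≤ Fintype.card ι * exp (N * L) := by
      calc ∑ i, exp (N * f i) ≤ ∑ _i : ι, exp (N * L) :=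
            Finset.sum_le_sum fun i _ => exp_le_exp.mpr <|
              mul_le_mul_of_nonneg_left (le_of_abs_le (hf i)) hN.le
        _ = Fintype.card ι * exp (N * L) := by simp
    have := log_le_log hsum_pos hsum_le
    rw [log_mul hcard.ne' (exp_ne_zero _), log_exp] at this
    linarith

theorem abs_add_div_mul_log_sum_exp_le {ι : Type*} [Fintype ι] [Nonempty ι] {f : ι → ℝ}
    {c C β N L : ℝ} (hc : |c| ≤ C) (hβ0 : 0 ≤ β) (hβ1 : β ≤ 1) (hN : 0 < N)
    (hf : ∀ i, |f i| ≤ L) :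
    |c + β / N * log (∑ i, exp (N * f i))| ≤ C + log (Fintype.card ι) / N + β * L := by
  have hlog := log_card_nonneg ι
  have hβN : |β / N| = β / N := abs_of_nonneg (div_nonneg hβ0 hN.le)
  have hterm : |β / N * log (∑ i, exp (N * f i))| ≤ β * L + β * (log (Fintype.card ι) / N) :=
    calc |β / N * log (∑ i, exp (N * f i))|
        ≤ β / N * (N * L + log (Fintype.card ι)) := by
          rw [abs_mul, hβN]
          exact mul_le_mul_of_nonneg_left (abs_log_sum_exp_mul_le hN hf) (by positivity)
      _ = β * L + β * (log (Fintype.card ι) / N) := by field_simp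
  have : β * (log (Fintype.card ι) / N) ≤ log (Fintype.card ι) / N :=
    mul_le_of_le_one_left (by positivity) hβ1
  linarith [abs_add_le c (β / N * log (∑ i, exp (N * f i)))]

theorem abs_add_mul_le_mul_one_add {x y θ β M : ℝ} (hβ : 0 ≤ β) (hx : |x| ≤ M) (hy : |y| ≤ M) :
    |x + β * θ * y| ≤ M * (1 + β * |θ|) := by
  calc |x + β * θ * y| ≤ |x| + β * |θ| * |y| := by
        simpa [abs_mul, abs_of_nonneg hβ] using abs_add_le x (β * θ * y)
    _ ≤ M + β * |θ| * M := by gcongr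
    _ = M * (1 + β * |θ|) := by ring

theorem abs_one_sub_mul_add_mul_le_s13 {q z α L M : ℝ} (hα0 : 0 ≤ α) (hα1 : α ≤ 1)
    (hq : |q| ≤ L) (hz : |z| ≤ M) :
    |(1 - α) * q + α * z| ≤ (1 - α) * L + α * M := by
  calc |(1 - α) * q + α * z| ≤ (1 - α) * |q| + α * |z| := by
        simpa [abs_mul, abs_of_nonneg hα0, abs_of_nonneg (sub_nonneg.mpr hα1)] using
          abs_add_le ((1 - α) * q) (α * z)
    _ ≤ (1 - α) * L + α * M := by gcongr

theorem mul_one_add_mul_abs_le {D β θ θ0 L : ℝ} (hβ0 : 0 ≤ β) (hβ1 : β < 1) (hD : 0 ≤ D)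
    (hθ : |θ| ≤ |θ0|) (hL : D / (1 - β) * (1 + β * |θ0|) ≤ L) :
    D * (1 + β * |θ|) ≤ (1 - β) * L := by
  rw [div_mul_eq_mul_div, div_le_iff₀ (sub_pos.mpr hβ1), mul_comm L] at hL
  exact (mul_le_mul_of_nonneg_left (by gcongr) hD).trans hL

theorem stsql_inductive_step_bound_general [Fintype S] [Fintype A] [Nonempty S] [Nonempty A]
    [DecidableEq S] [DecidableEq A]
    (β Cmax : ℝ) (hβ0 : 0 ≤ β) (hβ1 : β < 1)
    (N : ℝ) (hN : 0 < N)
    (Qn : S × A → ℝ) (sa : S × A) (j k : S) (c' c'' αn θn θ0 : ℝ)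
    (hc' : |c'| ≤ Cmax) (hc'' : |c''| ≤ Cmax)
    (hα0 : 0 ≤ αn) (hα1 : αn ≤ 1) (hθ : |θn| ≤ |θ0|)
    (L : ℝ)
    (hL : (Cmax / (1 - β) + Real.log (Fintype.card A) / (N * (1 - β))) * (1 + β * |θ0|) ≤ L)
    (hQn : maxNorm Qn ≤ L) :
    maxNorm (stsqlUpdate β N Qn sa j k c' c'' αn θn) ≤ L * (1 + αn * β ^ 2 * |θn|) := by
  set D := Cmax + log (Fintype.card A) / N
  have hD : 0 ≤ D := add_nonneg ((abs_nonneg _).trans hc') (div_nonneg (log_card_nonneg A) hN.le)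
  have hDL : D * (1 + β * |θn|) ≤ (1 - β) * L :=
    mul_one_add_mul_abs_le hβ0 hβ1 hD hθ (by rwa [← div_div, ← add_div] at hL)
  have hQ := maxNorm_le_iff.mp hQn
  have hL0 : 0 ≤ L := (abs_nonneg _).trans (hQ sa)
  rw [maxNorm_le_iff]
  intro x
  by_cases hx : x = sa
  · subst hx
    have htarget := abs_add_mul_le_mul_one_add (θ := θn) hβ0
      (abs_add_div_mul_log_sum_exp_le hc' hβ0 hβ1.le hN fun b => hQ (j, b))
      (abs_add_div_mul_log_sum_exp_le hc'' hβ0 hβ1.le hN fun e => hQ (k, e))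
    have hstep : (D + β * L) * (1 + β * |θn|) ≤ L * (1 + β ^ 2 * |θn|) := by
      linear_combination hDL
    simp only [stsqlUpdate, if_true]
    calc _ ≤ (1 - αn) * L + αn * (L * (1 + β ^ 2 * |θn|)) :=
          abs_one_sub_mul_add_mul_le_s13 hα0 hα1 (hQ x) (htarget.trans hstep)
      _ = L * (1 + αn * β ^ 2 * |θn|) := by ring
  · simp only [stsqlUpdate, if_neg hx]
    exact (hQ x).trans (le_mul_of_one_le_right hL0 (le_add_of_nonneg_right (by positivity)))

/-- If `L ≥ (C_max/(1−β) + log|A|/(N(1−β)))(1 + β|θ₀|)` and `‖Qₙ‖ ≤ L`, then one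
S-TSQL update gives `‖Qₙ₊₁‖ ≤ L (1 + αₙ β² |θₙ|)`. -/
theorem stsql_inductive_step_bound [Fintype S] [Fintype A] [Nonempty S] [Nonempty A]
    [DecidableEq S] [DecidableEq A]
    (β Cmax : ℝ) (hβ0 : 0 ≤ β) (hβ1 : β < 1) (hC : 0 ≤ Cmax)
    (N : ℝ) (hN : 0 < N)
    (Qn : S × A → ℝ) (sa : S × A) (j k : S) (c' c'' αn θn θ0 : ℝ)
    (hc' : |c'| ≤ Cmax) (hc'' : |c''| ≤ Cmax)
    (hα0 : 0 ≤ αn) (hα1 : αn ≤ 1) (hθ1 : |θn| ≤ 1) (hθ : |θn| ≤ |θ0|)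
    (L : ℝ)
    (hL : (Cmax / (1 - β) + Real.log (Fintype.card A) / (N * (1 - β))) * (1 + β * |θ0|) ≤ L)
    (hQn : maxNorm Qn ≤ L) :
    maxNorm (stsqlUpdate β N Qn sa j k c' c'' αn θn) ≤ L * (1 + αn * β ^ 2 * |θn|) :=
  stsql_inductive_step_bound_general β Cmax hβ0 hβ1 N hN Qn sa j k c' c'' αn θn θ0 hc' hc'' hα0 hα1
    hθ L hL hQn
end
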